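/- arXiv:1307.7752 — 2 statements merged into one kernel-verified Lean document; each statement's English description precedes it below -/
import Mathlib

section
/- Let p be a point of the unit sphere S² in EuclideanSpace ℝ (Fin 3), let e₀ = (1,0,0) and e₂ = (0,0,1), and consider the tangential gradients a = e₀ − ⟪e₀,p⟫•p and b = e₂ − ⟪e₂,p⟫•p of the two orthogonal height functions f(x)=x₀ and g(x)=x₂ at p. Then a and b are linearly dependent (there exists λ ∈ ℝ with a = λ•b or b = λ•a) if and only if the middle coordinate of p vanishes, p 1 = 0. Hence the Jacobi set of f and g on S² is exactly the great circle {p ∈ S² : p 1 = 0}. -/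
open scoped RealInnerProductSpace

/-!
For orthonormal `u, v` and a unit vector `p`, proportional tangential gradients
`u - ⟪u,p⟫ p = c (v - ⟪v,p⟫ p)` make the vector `u - c v`, nonzero by independence, a multiple
of `p`; so `p ∈ span {u, v}`. Conversely, if `p = a u + b v` with `a² + b² = 1`, both tangential
gradients are multiples of `b u - a v`, the tangent to the great circle through `u` and `v`.
For `u = e₀`, `v = e₂` that great circle is `{p 1 = 0}`.
-/

open Submodule

section InnerProductSpace

variable {E : Type*} [NormedAddCommGroup E] [InnerProductSpace ℝ E]

/-- The gradient at `p` of the height function `⟪·, u⟫` restricted to the unit sphere. -/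
def tangentialGradient (p u : E) : E := u - ⟪u, p⟫ • p

theorem exists_smul_eq_or_of_eq_smul_of_eq_smul {x y w : E} {a b : ℝ}
    (hx : x = a • w) (hy : y = b • w) : ∃ c : ℝ, x = c • y ∨ y = c • x := by
  by_cases hb : b = 0
  · exact ⟨0, Or.inr (by rw [hy, hb, zero_smul, zero_smul])⟩
  · exact ⟨a / b, Or.inl (by rw [hx, hy, smul_smul, div_mul_cancel₀ a hb])⟩

theorem mem_span_pair_of_tangentialGradient_eq_smul {u v p : E} {c : ℝ}
    (huv : LinearIndependent ℝ ![u, v])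
    (h : tangentialGradient p u = c • tangentialGradient p v) :
    p ∈ span ℝ {u, v} := by
  unfold tangentialGradient at h
  set k := ⟪u, p⟫ - c * ⟪v, p⟫
  have hkp : u - c • v = k • p := by linear_combination (norm := module) h
  have hk : k ≠ 0 := by
    intro hk
    rw [hk, zero_smul] at hkp
    obtain ⟨h1, -⟩ := LinearIndependent.pair_iff.1 huv 1 (-c) (by rw [← hkp]; module)
    exact one_ne_zero h1
  have hp : p = k⁻¹ • (u - c • v) := by rw [hkp, smul_smul, inv_mul_cancel₀ hk, one_smul]
  rw [hp]
  exact smul_mem _ _ (sub_mem (subset_span (by simp)) (smul_mem _ _ (subset_span (by simp))))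

theorem tangentialGradient_proportional_of_mem_span_pair {u v p : E}
    (huv : Orthonormal ℝ ![u, v]) (hp : ‖p‖ = 1) (hspan : p ∈ span ℝ {u, v}) :
    ∃ c : ℝ, tangentialGradient p u = c • tangentialGradient p v ∨
      tangentialGradient p v = c • tangentialGradient p u := by
  have hu : ⟪u, u⟫ = 1 := by simpa using orthonormal_iff_ite.1 huv 0 0
  have hv : ⟪v, v⟫ = 1 := by simpa using orthonormal_iff_ite.1 huv 1 1
  have hu_v : ⟪u, v⟫ = 0 := by simpa using orthonormal_iff_ite.1 huv 0 1
  obtain ⟨a, b, rfl⟩ := mem_span_pair.1 hspan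
  have hab : a ^ 2 + b ^ 2 = 1 := by
    have := real_inner_self_eq_norm_sq (a • u + b • v)
    simp only [hp, inner_add_left, inner_add_right, inner_smul_left, inner_smul_right,
      real_inner_comm u v, hu, hv, hu_v, RCLike.conj_to_real] at this
    linear_combination this
  have hpu : ⟪u, a • u + b • v⟫ = a := by
    simp only [inner_add_right, inner_smul_right, hu, hu_v]; ring
  have hpv : ⟪v, a • u + b • v⟫ = b := by
    simp only [inner_add_right, inner_smul_right, hv, real_inner_comm u v, hu_v]; ring
  apply exists_smul_eq_or_of_eq_smul_of_eq_smul (w := b • u - a • v) (a := b) (b := -a)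
  · rw [tangentialGradient, hpu]
    linear_combination (norm := module) (-hab) • u
  · rw [tangentialGradient, hpv]
    linear_combination (norm := module) (-hab) • v

theorem tangentialGradient_proportional_iff_mem_span_pair {u v p : E}
    (huv : Orthonormal ℝ ![u, v]) (hp : ‖p‖ = 1) :
    (∃ c : ℝ, tangentialGradient p u = c • tangentialGradient p v ∨
      tangentialGradient p v = c • tangentialGradient p u) ↔ p ∈ span ℝ {u, v} := by
  refine ⟨?_, tangentialGradient_proportional_of_mem_span_pair huv hp⟩
  rintro ⟨c, h | h⟩
  · exact mem_span_pair_of_tangentialGradient_eq_smul huv.linearIndependent h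
  · rw [Set.pair_comm]
    exact mem_span_pair_of_tangentialGradient_eq_smul
      (LinearIndependent.pair_symm_iff.1 huv.linearIndependent) h

end InnerProductSpace

theorem EuclideanSpace.orthonormal_single_pair {ι : Type*} [Fintype ι] [DecidableEq ι]
    {i j : ι} (hij : i ≠ j) :
    Orthonormal ℝ ![EuclideanSpace.single i (1 : ℝ), EuclideanSpace.single j 1] := by
  have hinj : Function.Injective ![i, j] := by
    intro k l
    fin_cases k <;> fin_cases l <;> simp [hij, hij.symm]
  convert EuclideanSpace.orthonormal_single.comp _ hinj using 1
  ext k : 1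
  fin_cases k <;> rfl

theorem mem_span_single_zero_single_two_iff (p : EuclideanSpace ℝ (Fin 3)) :
    p ∈ span ℝ {EuclideanSpace.single (0 : Fin 3) (1 : ℝ), EuclideanSpace.single 2 1} ↔
      p 1 = 0 := by
  rw [mem_span_pair]
  constructor
  · rintro ⟨a, b, rfl⟩
    simp
  · intro h1
    refine ⟨p 0, p 2, ?_⟩
    ext i
    fin_cases i <;> simp [h1]

/-- The Jacobi set of the two orthogonal height functions `f(x) = x 0` and `g(x) = x 2`
on the unit sphere in `EuclideanSpace ℝ (Fin 3)` is the great circle `{p | p 1 = 0}`: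
the tangential gradients `e₀ - ⟪e₀,p⟫ • p` and `e₂ - ⟪e₂,p⟫ • p` are linearly dependent
iff the middle coordinate of `p` vanishes. -/
theorem jacobi_set_of_orthogonal_height_functions_on_sphere
    (p : EuclideanSpace ℝ (Fin 3))
    (hp : p ∈ Metric.sphere (0 : EuclideanSpace ℝ (Fin 3)) 1) :
    (∃ lam : ℝ,
        (EuclideanSpace.single (0 : Fin 3) (1 : ℝ)
            - ⟪EuclideanSpace.single (0 : Fin 3) (1 : ℝ), p⟫ • p)
          = lam • (EuclideanSpace.single (2 : Fin 3) (1 : ℝ)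
            - ⟪EuclideanSpace.single (2 : Fin 3) (1 : ℝ), p⟫ • p) ∨
        (EuclideanSpace.single (2 : Fin 3) (1 : ℝ)
            - ⟪EuclideanSpace.single (2 : Fin 3) (1 : ℝ), p⟫ • p)
          = lam • (EuclideanSpace.single (0 : Fin 3) (1 : ℝ)
            - ⟪EuclideanSpace.single (0 : Fin 3) (1 : ℝ), p⟫ • p)) ↔
      p 1 = 0 := by
  rw [← mem_span_single_zero_single_two_iff]
  exact tangentialGradient_proportional_iff_mem_span_pair
    (EuclideanSpace.orthonormal_single_pair (by decide)) (mem_sphere_zero_iff_norm.1 hp)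
end

section
/- Let f : ℝ → ℝ be twice continuously differentiable (ContDiff ℝ 2) and periodic with period 1, and suppose every critical point of f is nondegenerate, i.e. deriv f x = 0 implies deriv (deriv f) x ≠ 0. Then the sets A = {x ∈ [0,1) : deriv f x = 0 ∧ deriv (deriv f) x < 0} (local maxima) and B = {x ∈ [0,1) : deriv f x = 0 ∧ deriv (deriv f) x > 0} (local minima) are finite and have the same cardinality. That is, a Morse function on the circle has equally many maxima and minima, so its restricted critical points occur in pairs. -/
/-!
Write `g = f'`. Its zeros are nondegenerate, hence isolated, hence finitely many per period.
Starting from a zero `x` where `g` crosses downwards, `g` stays negative until its next zero `t`,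
where it must therefore cross upwards. Reducing `t` mod `1` gives a map from maxima to minima in
`[0, 1)`; it is injective because `x` is recovered from `t` as the last zero before it. Applied
to `-f`, which swaps maxima and minima, the same argument gives the reverse inequality.
-/

open Set Filter Topology

namespace Function.Periodic

variable {f : ℝ → ℝ}

theorem deriv {c : ℝ} (h : Periodic f c) : Periodic (deriv f) c := fun x => by
  rw [← deriv_comp_add_const, show (fun y => f (y + c)) = f from funext h]

theorem apply_fract (h : Periodic f 1) (x : ℝ) : f (Int.fract x) = f x := by
  simpa [Int.self_sub_floor] using h.sub_int_mul_eq (x := x) ⌊x⌋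

end Function.Periodic

section ZerosOfRealFunctions

variable {g : ℝ → ℝ}

theorem finite_zeros_of_deriv_ne_zero (hg : Continuous g)
    (hnd : ∀ x, g x = 0 → deriv g x ≠ 0) {K : Set ℝ} (hK : IsCompact K) :
    {x ∈ K | g x = 0}.Finite := by
  refine (hK.inter_right (isClosed_eq hg continuous_const)).finite ?_
  refine isDiscrete_iff_nhdsNE.2 fun x hx => inf_principal_eq_bot.2 ?_
  have hiso := (differentiableAt_of_deriv_ne_zero (hnd x hx.2)).hasDerivAt.eventually_ne
    (c := 0) (hnd x hx.2)
  filter_upwards [hiso] with y hy hyK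
  exact hy hyK.2

theorem exists_first_zero_Ioc {x b : ℝ} (hfin : {y ∈ Ioc x b | g y = 0}.Finite)
    (hxb : x < b) (hb : g b = 0) :
    ∃ t ∈ Ioc x b, g t = 0 ∧ ∀ z ∈ Ioo x t, g z ≠ 0 := by
  obtain ⟨t, ⟨htI, ht⟩, hmin⟩ := exists_min_image _ id hfin ⟨b, ⟨hxb, le_rfl⟩, hb⟩
  refine ⟨t, htI, ht, fun z hz hgz => ?_⟩
  exact (hmin z ⟨⟨hz.1, hz.2.le.trans htI.2⟩, hgz⟩).not_gt hz.2

theorem eq_of_forall_Ioo_ne_zero {x y t : ℝ} (hx : g x = 0) (hy : g y = 0)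
    (hxt : x < t) (hyt : y < t) (hnx : ∀ z ∈ Ioo x t, g z ≠ 0)
    (hny : ∀ z ∈ Ioo y t, g z ≠ 0) : x = y := by
  rcases lt_trichotomy x y with hxy | hxy | hxy
  · exact absurd hy (hnx y ⟨hxy, hyt⟩)
  · exact hxy
  · exact absurd hx (hny x ⟨hxy, hxt⟩)

/-- If `g` crossed zero downwards at `t` as well, it would be negative just after `x` and positive
just before `t`, so it would vanish in between. -/
theorem deriv_pos_of_deriv_neg_of_forall_Ioo_ne_zero {x t : ℝ} (hg : ContinuousOn g (Ioo x t))
    (hxt : x < t) (hx : g x = 0) (hdx : deriv g x < 0) (ht : g t = 0) (hdt : deriv g t ≠ 0)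
    (hne : ∀ z ∈ Ioo x t, g z ≠ 0) : 0 < deriv g t := by
  obtain ⟨a, hsa, ha⟩ := (((eventually_nhdsWithin_sign_eq_of_deriv_neg hdx hx).filter_mono
    nhdsWithin_le_nhds).and (Ioo_mem_nhdsGT hxt)).exists
  refine hdt.lt_or_gt.resolve_left fun hdt_neg => ?_
  obtain ⟨b, hsb, hb⟩ := (((eventually_nhdsWithin_sign_eq_of_deriv_neg hdt_neg ht).filter_mono
    nhdsWithin_le_nhds).and (Ioo_mem_nhdsLT hxt)).exists
  have hga : g a < 0 := sign_eq_neg_one_iff.1 (hsa.trans (sign_neg (sub_neg.2 ha.1)))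
  have hgb : 0 < g b := sign_eq_one_iff.1 (hsb.trans (sign_pos (sub_pos.2 hb.2)))
  obtain ⟨c, hc, hgc⟩ := isPreconnected_Ioo.intermediate_value ha hb hg ⟨hga.le, hgb.le⟩
  exact hne c hc hgc

theorem injOn_fract_of_forall_Ioo_ne_zero (hper : Function.Periodic g 1) {s : Set ℝ}
    (hs : s ⊆ Ico 0 1) {t : ℝ → ℝ}
    (ht : ∀ x ∈ s, g x = 0 ∧ x < t x ∧ ∀ z ∈ Ioo x (t x), g z ≠ 0) :
    InjOn (fun x => Int.fract (t x)) s := by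
  intro x hxs y hys hxy
  obtain ⟨hx, hxt, hnx⟩ := ht x hxs
  obtain ⟨hy, hyt, hny⟩ := ht y hys
  set n : ℤ := ⌊t x⌋ - ⌊t y⌋
  have htxy : t x = t y + n := by
    simp only [← Int.self_sub_floor] at hxy
    push_cast [n]
    linarith
  have hshift : x = y + n := by
    have hyn : g (y + n) = 0 := by simpa using (hper.int_mul n y).trans hy
    refine eq_of_forall_Ioo_ne_zero hx hyn hxt (by linarith) hnx fun z hz => ?_
    rw [← (hper.int_mul n).sub_eq z, mul_one]
    exact hny _ ⟨by linarith [hz.1], by linarith [hz.2]⟩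
  have hn : n = 0 := by
    obtain ⟨⟨hx0, hx1⟩, hy0, hy1⟩ := And.intro (hs hxs) (hs hys)
    have hlt : n < 1 := by exact_mod_cast (by linarith : (n : ℝ) < 1)
    have hgt : -1 < n := by exact_mod_cast (by linarith : (-1 : ℝ) < n)
    omega
  simpa [hn] using hshift

theorem ncard_zeros_deriv_neg_le_ncard_zeros_deriv_pos (hg : Continuous g)
    (hper : Function.Periodic g 1) (hnd : ∀ x, g x = 0 → deriv g x ≠ 0) :
    {x ∈ Ico (0 : ℝ) 1 | g x = 0 ∧ deriv g x < 0}.ncard ≤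
      {x ∈ Ico (0 : ℝ) 1 | g x = 0 ∧ 0 < deriv g x}.ncard := by
  have hnext :
      ∀ x, g x = 0 → ∃ t ∈ Ioc x (x + 1), g t = 0 ∧ ∀ z ∈ Ioo x t, g z ≠ 0 :=
    fun x hx => exists_first_zero_Ioc
      ((finite_zeros_of_deriv_ne_zero hg hnd isCompact_Icc).subset
        fun y hy => ⟨Ioc_subset_Icc_self hy.1, hy.2⟩)
      (lt_add_one x) ((hper x).trans hx)
  choose! t ht using hnext
  refine ncard_le_ncard_of_injOn (fun x => Int.fract (t x)) ?_ ?_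
    ((finite_zeros_of_deriv_ne_zero hg hnd isCompact_Icc).subset
      fun y hy => ⟨Ico_subset_Icc_self hy.1, hy.2.1⟩)
  · rintro x ⟨-, hx, hdx⟩
    obtain ⟨⟨hxt, -⟩, htz, hne⟩ := ht x hx
    refine ⟨⟨Int.fract_nonneg _, Int.fract_lt_one _⟩, (hper.apply_fract _).trans htz, ?_⟩
    rw [hper.deriv.apply_fract]
    exact deriv_pos_of_deriv_neg_of_forall_Ioo_ne_zero hg.continuousOn hxt hx hdx htz
      (hnd _ htz) hne
  · exact injOn_fract_of_forall_Ioo_ne_zero hper (fun x hx => hx.1) fun x ⟨_, hx, _⟩ =>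
      ⟨hx, (ht x hx).1.1, (ht x hx).2.2⟩

end ZerosOfRealFunctions

/-- A Morse function on the circle (a twice continuously differentiable `1`-periodic
function all of whose critical points are nondegenerate) has finitely many maxima and
minima in a fundamental domain `[0,1)`, and equally many of each. -/
theorem morse_function_on_circle_equal_maxima_minima
    (f : ℝ → ℝ) (hf : ContDiff ℝ 2 f) (hper : Function.Periodic f 1)
    (hmorse : ∀ x : ℝ, deriv f x = 0 → deriv (deriv f) x ≠ 0) :
    {x ∈ Set.Ico (0 : ℝ) 1 | deriv f x = 0 ∧ deriv (deriv f) x < 0}.Finite ∧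
    {x ∈ Set.Ico (0 : ℝ) 1 | deriv f x = 0 ∧ deriv (deriv f) x > 0}.Finite ∧
    {x ∈ Set.Ico (0 : ℝ) 1 | deriv f x = 0 ∧ deriv (deriv f) x < 0}.ncard =
      {x ∈ Set.Ico (0 : ℝ) 1 | deriv f x = 0 ∧ deriv (deriv f) x > 0}.ncard := by
  have hg : Continuous (deriv f) := hf.continuous_deriv (by norm_num)
  have hfin := finite_zeros_of_deriv_ne_zero hg hmorse (isCompact_Icc (a := 0) (b := 1))
  refine ⟨hfin.subset fun x hx => ⟨Ico_subset_Icc_self hx.1, hx.2.1⟩,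
    hfin.subset fun x hx => ⟨Ico_subset_Icc_self hx.1, hx.2.1⟩,
    le_antisymm (ncard_zeros_deriv_neg_le_ncard_zeros_deriv_pos hg hper.deriv hmorse) ?_⟩
  have hneg := ncard_zeros_deriv_neg_le_ncard_zeros_deriv_pos (g := -deriv f) hg.neg
    (fun x => congrArg Neg.neg (hper.deriv x)) (by simpa [deriv.neg'] using hmorse)
  simpa [deriv.neg'] using hneg
end
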